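/- arXiv:2503.22386 — 3 statements merged into one kernel-verified Lean document; each statement's English description precedes it below -/
import Mathlib

section
/- Let (Ω̂, μ) be a finite measure space and N ≥ 2 an integer. Let A : ℝ^{N−1} → ℝ^{N−1} be measurable and suppose there exist constants C_A, C_L > 0 such that for all u, v ∈ ℝ^{N−1}: |u − v|² ≤ C_A |A(u) − A(v)|² (stability) and |A(u) − A(v)|² ≤ C_L |u − v|² (Lipschitz continuity). Let ω* : Ω̂ → ℝ^{N−1} be a bounded measurable function and set F(Υ) = A(ω*(Υ)). For each n ≥ 1 let 𝔑_n be a nonempty set of bounded measurable functions Ω̂ → ℝ^{N−1} such that lim_{n→∞} inf_{g ∈ 𝔑_n} sup_{Υ ∈ Ω̂} |g(Υ) − ω*(Υ)| = 0, and let ω̂_n ∈ 𝔑_n satisfy 𝔏(ω̂_n) = inf_{g ∈ 𝔑_n} 𝔏(g). Then ∫_{Ω̂} |ω*(Υ) − ω̂_n(Υ)|² dμ(Υ) → 0 as n → ∞. -/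
open MeasureTheory Filter
open scoped ENNReal

/-! The loss controls the error: by stability, `∫ ‖ω* - ω̂ₙ‖² ≤ C_A 𝔏(ω̂ₙ)`, and since `ω̂ₙ` minimises
the loss over `𝔑ₙ`, `𝔏(ω̂ₙ) ≤ 𝔏(g) ≤ C_L μ(Ω̂) sup ‖g - ω*‖²` for every `g ∈ 𝔑ₙ` by the Lipschitz
bound. Choosing `g` uniformly close to `ω*` makes the right-hand side arbitrarily small. -/

section

variable {α : Type*} [MeasurableSpace α] {μ : Measure α}

lemma enorm_sq_eq_ofReal_norm_sq {E : Type*} [SeminormedAddGroup E] (x : E) :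
    ‖x‖ₑ ^ 2 = ENNReal.ofReal (‖x‖ ^ 2) := by
  rw [ENNReal.ofReal_pow (norm_nonneg x), ofReal_norm]

lemma lintegral_enorm_sq_le_of_norm_sq_le {E F : Type*} [SeminormedAddGroup E]
    [SeminormedAddGroup F] {f : α → E} {g : α → F} {C : ℝ}
    (h : ∀ x, ‖f x‖ ^ 2 ≤ C * ‖g x‖ ^ 2) :
    ∫⁻ x, ‖f x‖ₑ ^ 2 ∂μ ≤ ENNReal.ofReal C * ∫⁻ x, ‖g x‖ₑ ^ 2 ∂μ := by
  rw [← lintegral_const_mul' _ _ ENNReal.ofReal_ne_top]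
  refine lintegral_mono fun x => ?_
  rw [enorm_sq_eq_ofReal_norm_sq, enorm_sq_eq_ofReal_norm_sq,
    ← ENNReal.ofReal_mul' (sq_nonneg _)]
  exact ENNReal.ofReal_le_ofReal (h x)

lemma lintegral_enorm_sq_le_iSup_sq_mul {E : Type*} [SeminormedAddGroup E] (f : α → E) :
    ∫⁻ x, ‖f x‖ₑ ^ 2 ∂μ ≤ (⨆ x, ‖f x‖ₑ) ^ 2 * μ .univ :=
  (lintegral_le_iSup_mul _).trans <|
    mul_le_mul_left (iSup_le fun x => pow_le_pow_left' (le_iSup (fun y => ‖f y‖ₑ) x) 2) _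

end

lemma tendsto_zero_of_le_of_tendsto_biInf {β ι : Type*} {l : Filter β} {S : β → Set ι}
    {D : ι → ℝ≥0∞} {e : β → ℝ≥0∞} {φ : ℝ≥0∞ → ℝ≥0∞} (hφ : Tendsto φ (nhds 0) (nhds 0))
    (hD : Tendsto (fun n => ⨅ g ∈ S n, D g) l (nhds 0)) (he : ∀ n, ∀ g ∈ S n, e n ≤ φ (D g)) :
    Tendsto e l (nhds 0) := by
  rw [ENNReal.tendsto_nhds_zero]
  intro ε hε
  obtain ⟨δ, hδ, hφδ⟩ := ENNReal.nhds_zero_basis.mem_iff.1 (hφ (Iic_mem_nhds hε))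
  filter_upwards [hD.eventually_lt_const hδ] with n hn
  obtain ⟨g, hg, hgδ⟩ : ∃ g ∈ S n, D g < δ := by simpa only [iInf_lt_iff, exists_prop] using hn
  exact (he n g hg).trans (hφδ hgδ)

theorem approximation_error_tendsto_zero_general
    {Ωhat : Type*} [MeasurableSpace Ωhat] (μ : Measure Ωhat) [IsFiniteMeasure μ]
    (N : ℕ)
    (A : EuclideanSpace ℝ (Fin (N - 1)) → EuclideanSpace ℝ (Fin (N - 1)))
    (CA CL : ℝ)
    (hstab : ∀ u v : EuclideanSpace ℝ (Fin (N - 1)), ‖u - v‖ ^ 2 ≤ CA * ‖A u - A v‖ ^ 2)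
    (hlip : ∀ u v : EuclideanSpace ℝ (Fin (N - 1)), ‖A u - A v‖ ^ 2 ≤ CL * ‖u - v‖ ^ 2)
    (ωstar : Ωhat → EuclideanSpace ℝ (Fin (N - 1)))
    (F : Ωhat → EuclideanSpace ℝ (Fin (N - 1))) (hF : ∀ Υ, F Υ = A (ωstar Υ))
    (𝔑 : ℕ → Set (Ωhat → EuclideanSpace ℝ (Fin (N - 1))))
    (happrox : Tendsto
      (fun n => ⨅ g ∈ 𝔑 n, ⨆ Υ, (‖g Υ - ωstar Υ‖₊ : ℝ≥0∞)) atTop (nhds 0))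
    (ωn : ℕ → Ωhat → EuclideanSpace ℝ (Fin (N - 1)))
    (hωn_min : ∀ n,
      (∫⁻ Υ, (‖A (ωn n Υ) - F Υ‖₊ : ℝ≥0∞) ^ 2 ∂μ)
        = ⨅ g ∈ 𝔑 n, ∫⁻ Υ, (‖A (g Υ) - F Υ‖₊ : ℝ≥0∞) ^ 2 ∂μ) :
    Tendsto (fun n => ∫⁻ Υ, (‖ωstar Υ - ωn n Υ‖₊ : ℝ≥0∞) ^ 2 ∂μ) atTop (nhds 0) := by
  set K := ENNReal.ofReal CA * ENNReal.ofReal CL * μ .univ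
  have hK : K ≠ ∞ := by finiteness
  have hφ : Tendsto (fun d : ℝ≥0∞ => K * d ^ 2) (nhds 0) (nhds 0) := by
    simpa using ENNReal.Tendsto.const_mul ((ENNReal.continuous_pow 2).tendsto 0) (Or.inr hK)
  refine tendsto_zero_of_le_of_tendsto_biInf hφ happrox fun n g hg => ?_
  calc ∫⁻ Υ, ‖ωstar Υ - ωn n Υ‖ₑ ^ 2 ∂μ
      ≤ ENNReal.ofReal CA * ∫⁻ Υ, ‖A (ωn n Υ) - F Υ‖ₑ ^ 2 ∂μ :=
        lintegral_enorm_sq_le_of_norm_sq_le fun Υ => by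
          rw [hF, norm_sub_rev (A _)]; exact hstab _ _
    _ ≤ ENNReal.ofReal CA * ∫⁻ Υ, ‖A (g Υ) - F Υ‖ₑ ^ 2 ∂μ := by
        gcongr ENNReal.ofReal CA * ?_
        exact (hωn_min n).trans_le (iInf₂_le g hg)
    _ ≤ ENNReal.ofReal CA * (ENNReal.ofReal CL * ∫⁻ Υ, ‖g Υ - ωstar Υ‖ₑ ^ 2 ∂μ) := by
        gcongr
        exact lintegral_enorm_sq_le_of_norm_sq_le fun Υ => by rw [hF]; exact hlip _ _
    _ ≤ ENNReal.ofReal CA * (ENNReal.ofReal CL * ((⨆ Υ, ‖g Υ - ωstar Υ‖ₑ) ^ 2 * μ .univ)) := by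
        gcongr
        exact lintegral_enorm_sq_le_iSup_sq_mul _
    _ = K * (⨆ Υ, ‖g Υ - ωstar Υ‖ₑ) ^ 2 := by ring

/-- **Convergence of the approximation error (Theorem 4.1 / `2st-convergence-theorem`).**
Let `A : ℝ^{N-1} → ℝ^{N-1}` be measurable, satisfying a stability estimate
`‖u - v‖² ≤ C_A ‖A u - A v‖²` and a Lipschitz estimate `‖A u - A v‖² ≤ C_L ‖u - v‖²`.
Let `F = A ∘ ω*` for a bounded measurable target `ω*`, and for each `n` let `ωn n` be a
minimizer of the loss `𝔏(g) = ∫ ‖A(g(Υ)) - F(Υ)‖² dμ` over the class `𝔑 n` of bounded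
measurable functions.  If the classes `𝔑 n` approximate `ω*` uniformly in the limit,
then `∫ ‖ω* - ωn n‖² dμ → 0`. -/
theorem approximation_error_tendsto_zero
    {Ωhat : Type*} [MeasurableSpace Ωhat] (μ : Measure Ωhat) [IsFiniteMeasure μ]
    (N : ℕ) (hN : 2 ≤ N)
    (A : EuclideanSpace ℝ (Fin (N - 1)) → EuclideanSpace ℝ (Fin (N - 1)))
    (hA : Measurable A)
    (CA CL : ℝ) (hCA : 0 < CA) (hCL : 0 < CL)
    (hstab : ∀ u v : EuclideanSpace ℝ (Fin (N - 1)), ‖u - v‖ ^ 2 ≤ CA * ‖A u - A v‖ ^ 2)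
    (hlip : ∀ u v : EuclideanSpace ℝ (Fin (N - 1)), ‖A u - A v‖ ^ 2 ≤ CL * ‖u - v‖ ^ 2)
    (ωstar : Ωhat → EuclideanSpace ℝ (Fin (N - 1))) (hωstar : Measurable ωstar)
    (hωstar_bdd : ∃ C : ℝ, ∀ Υ, ‖ωstar Υ‖ ≤ C)
    (F : Ωhat → EuclideanSpace ℝ (Fin (N - 1))) (hF : ∀ Υ, F Υ = A (ωstar Υ))
    (𝔑 : ℕ → Set (Ωhat → EuclideanSpace ℝ (Fin (N - 1))))
    (h𝔑_ne : ∀ n, (𝔑 n).Nonempty)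
    (h𝔑 : ∀ n, ∀ g ∈ 𝔑 n, Measurable g ∧ ∃ C : ℝ, ∀ Υ, ‖g Υ‖ ≤ C)
    (happrox : Tendsto
      (fun n => ⨅ g ∈ 𝔑 n, ⨆ Υ, (‖g Υ - ωstar Υ‖₊ : ℝ≥0∞)) atTop (nhds 0))
    (ωn : ℕ → Ωhat → EuclideanSpace ℝ (Fin (N - 1)))
    (hωn_mem : ∀ n, ωn n ∈ 𝔑 n)
    (hωn_min : ∀ n,
      (∫⁻ Υ, (‖A (ωn n Υ) - F Υ‖₊ : ℝ≥0∞) ^ 2 ∂μ)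
        = ⨅ g ∈ 𝔑 n, ∫⁻ Υ, (‖A (g Υ) - F Υ‖₊ : ℝ≥0∞) ^ 2 ∂μ) :
    Tendsto (fun n => ∫⁻ Υ, (‖ωstar Υ - ωn n Υ‖₊ : ℝ≥0∞) ^ 2 ∂μ) atTop (nhds 0) :=
  approximation_error_tendsto_zero_general μ N A CA CL hstab hlip ωstar F hF 𝔑 happrox ωn hωn_min
end

section
/- Let X > 0, let n ≥ 1 be an integer, let ζ ∈ (0,1), and let x ∈ (0, X]. Then (1/Γ(1−ζ)) ∫_0^x (x − s)^{−ζ} (d/ds) P̂_n(s) ds = Σ_{k=1}^n (−1)^{n+k} Γ(k+1) (n+k)! x^{k−ζ} / (X^k (n−k)! Γ(k+1−ζ) (k!)²); that is, the Caputo fractional derivative of order ζ of the shifted Legendre polynomial P̂_n equals the stated finite sum. -/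
/-!
The Caputo derivative is linear, kills constants, and on a monomial reduces to Euler's beta
integral: `∫₀ˣ (x - s)^(-ζ) k s^(k-1) ds = k B(k, 1 - ζ) x^(k-ζ) = Γ(k+1) Γ(1-ζ) / Γ(k+1-ζ) x^(k-ζ)`.
Expanding `P̂_n` in monomials gives the formula term by term.
-/

/-- The shifted Legendre polynomial of degree `n` on `[0, X]`:
`P̂_n(x) = Σ_{k=0}^n (−1)^{n+k} (n+k)! x^k / (X^k (n−k)! (k!)²)`. -/
noncomputable def shiftedLegendre (X : ℝ) (n : ℕ) (x : ℝ) : ℝ :=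
  ∑ k ∈ Finset.range (n + 1),
    (-1 : ℝ) ^ (n + k) * ((n + k).factorial : ℝ) * x ^ k /
      (X ^ k * ((n - k).factorial : ℝ) * ((k.factorial : ℝ)) ^ 2)

open Finset intervalIntegral

theorem integral_rpow_mul_sub_rpow {a b x : ℝ} (ha : 0 < a) (hb : 0 < b) (hx : 0 < x) :
    ∫ s in (0 : ℝ)..x, s ^ (a - 1) * (x - s) ^ (b - 1) =
      Real.Gamma a * Real.Gamma b / Real.Gamma (a + b) * x ^ (a + b - 1) := by
  have hcpow : ∀ s ∈ Set.uIcc 0 x, ((s ^ (a - 1) * (x - s) ^ (b - 1) : ℝ) : ℂ) =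
      (s : ℂ) ^ ((a : ℂ) - 1) * ((x : ℂ) - s) ^ ((b : ℂ) - 1) := by
    intro s hs
    rw [Set.uIcc_of_le hx.le] at hs
    push_cast [Complex.ofReal_mul, Complex.ofReal_cpow hs.1,
      Complex.ofReal_cpow (sub_nonneg.mpr hs.2)]
    rfl
  apply Complex.ofReal_injective
  rw [← integral_ofReal, integral_congr hcpow, Complex.betaIntegral_scaled _ _ hx,
    Complex.betaIntegral_eq_Gamma_mul_div _ _ (by simpa) (by simpa)]
  push_cast [Complex.ofReal_cpow hx.le, ← Complex.Gamma_ofReal]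
  ring

theorem intervalIntegrable_sub_rpow_neg_mul {ζ a x : ℝ} {g : ℝ → ℝ} (hζ : ζ < 1)
    (hg : ContinuousOn g (Set.uIcc a x)) :
    IntervalIntegrable (fun s => (x - s) ^ (-ζ) * g s) MeasureTheory.volume a x := by
  refine IntervalIntegrable.mul_continuousOn ?_ hg
  simpa using (intervalIntegrable_rpow' (a := x - a) (b := 0) (neg_lt_neg hζ)).comp_sub_left x

noncomputable def caputoDeriv (ζ : ℝ) (f : ℝ → ℝ) (x : ℝ) : ℝ :=
  1 / Real.Gamma (1 - ζ) * ∫ s in (0 : ℝ)..x, (x - s) ^ (-ζ) * deriv f s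

section caputoDeriv

variable {ζ x : ℝ}

theorem caputoDeriv_const_mul (c : ℝ) (f : ℝ → ℝ) :
    caputoDeriv ζ (fun y => c * f y) x = c * caputoDeriv ζ f x := by
  simp only [caputoDeriv, deriv_const_mul_field', mul_left_comm _ c, integral_const_mul]

theorem caputoDeriv_sum {ι : Type*} (t : Finset ι) {f : ι → ℝ → ℝ} (hζ : ζ < 1)
    (hf : ∀ i ∈ t, ContDiff ℝ 1 (f i)) :
    caputoDeriv ζ (fun y => ∑ i ∈ t, f i y) x = ∑ i ∈ t, caputoDeriv ζ (f i) x := by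
  have hderiv : deriv (fun y => ∑ i ∈ t, f i y) = fun s => ∑ i ∈ t, deriv (f i) s :=
    funext fun s => deriv_fun_sum fun i hi => (hf i hi).differentiable one_ne_zero s
  simp only [caputoDeriv, hderiv, mul_sum]
  rw [integral_finsetSum fun i hi =>
    intervalIntegrable_sub_rpow_neg_mul hζ ((hf i hi).continuous_deriv le_rfl).continuousOn, mul_sum]

theorem caputoDeriv_const (c : ℝ) : caputoDeriv ζ (fun _ => c) x = 0 := by
  simp [caputoDeriv]

theorem caputoDeriv_pow {k : ℕ} (hk : 1 ≤ k) (hζ : ζ < 1) (hx : 0 < x) :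
    caputoDeriv ζ (fun s => s ^ k) x =
      Real.Gamma (k + 1) / Real.Gamma (k + 1 - ζ) * x ^ ((k : ℝ) - ζ) := by
  have hk' : (0 : ℝ) < k := by exact_mod_cast hk
  have hintegrand : (fun s => (x - s) ^ (-ζ) * deriv (fun s => s ^ k) s) =
      fun s => k * (s ^ ((k : ℝ) - 1) * (x - s) ^ ((1 - ζ) - 1)) := by
    funext s
    rw [deriv_pow_field, ← Real.rpow_natCast, Nat.cast_sub hk, Nat.cast_one]
    ring_nf
  have hG : Real.Gamma (1 - ζ) ≠ 0 := (Real.Gamma_pos_of_pos (by linarith)).ne'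
  rw [caputoDeriv, hintegrand, integral_const_mul,
    integral_rpow_mul_sub_rpow hk' (by linarith) hx, Real.Gamma_add_one hk'.ne',
    show (k : ℝ) + (1 - ζ) = k + 1 - ζ by ring, show (k : ℝ) + 1 - ζ - 1 = k - ζ by ring]
  field_simp

theorem caputoDeriv_sum_mul_pow (N : ℕ) (c : ℕ → ℝ) (hζ : ζ < 1) (hx : 0 < x) :
    caputoDeriv ζ (fun s => ∑ k ∈ range (N + 1), c k * s ^ k) x =
      ∑ k ∈ Icc 1 N, c k * (Real.Gamma (k + 1) / Real.Gamma (k + 1 - ζ) * x ^ ((k : ℝ) - ζ)) := by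
  rw [caputoDeriv_sum _ hζ fun k _ => by fun_prop, range_eq_Ico,
    sum_eq_sum_Ico_succ_bot N.add_one_pos, zero_add, Ico_add_one_right_eq_Icc]
  simp only [caputoDeriv_const_mul, pow_zero, mul_one, caputoDeriv_const, zero_add]
  exact sum_congr rfl fun k hk => by rw [caputoDeriv_pow (mem_Icc.mp hk).1 hζ hx]

end caputoDeriv

theorem caputo_deriv_shiftedLegendre_general (X : ℝ) (n : ℕ)
    (ζ : ℝ) (hζ : ζ ∈ Set.Ioo (0:ℝ) 1) (x : ℝ) (hx : x ∈ Set.Ioc 0 X) :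
    (1 / Real.Gamma (1 - ζ)) *
      ∫ s in (0:ℝ)..x, (x - s) ^ (-ζ) * deriv (shiftedLegendre X n) s
      = ∑ k ∈ Finset.Icc 1 n,
        (-1 : ℝ) ^ (n + k) * Real.Gamma ((k : ℝ) + 1) * ((n + k).factorial : ℝ) *
            x ^ ((k : ℝ) - ζ) /
          (X ^ k * ((n - k).factorial : ℝ) * Real.Gamma ((k : ℝ) + 1 - ζ) *
            ((k.factorial : ℝ)) ^ 2) := by
  have hP : shiftedLegendre X n = fun s => ∑ k ∈ range (n + 1),
      (-1 : ℝ) ^ (n + k) * (n + k).factorial / (X ^ k * (n - k).factorial * k.factorial ^ 2) *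
        s ^ k := by
    funext s
    exact sum_congr rfl fun k _ => by ring
  change caputoDeriv ζ (shiftedLegendre X n) x = _
  rw [hP, caputoDeriv_sum_mul_pow n _ hζ.2 hx.1]
  exact sum_congr rfl fun k _ => by ring

/-- **Caputo fractional derivative of the shifted Legendre polynomial.**
For `ζ ∈ (0,1)` and `x ∈ (0, X]`,
`(1/Γ(1−ζ)) ∫₀ˣ (x−s)^{−ζ} P̂_n'(s) ds
  = Σ_{k=1}^n (−1)^{n+k} Γ(k+1) (n+k)! x^{k−ζ} / (X^k (n−k)! Γ(k+1−ζ) (k!)²)`. -/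
theorem caputo_deriv_shiftedLegendre (X : ℝ) (hX : 0 < X) (n : ℕ) (hn : 1 ≤ n)
    (ζ : ℝ) (hζ : ζ ∈ Set.Ioo (0:ℝ) 1) (x : ℝ) (hx : x ∈ Set.Ioc 0 X) :
    (1 / Real.Gamma (1 - ζ)) *
      ∫ s in (0:ℝ)..x, (x - s) ^ (-ζ) * deriv (shiftedLegendre X n) s
      = ∑ k ∈ Finset.Icc 1 n,
        (-1 : ℝ) ^ (n + k) * Real.Gamma ((k : ℝ) + 1) * ((n + k).factorial : ℝ) *
            x ^ ((k : ℝ) - ζ) /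
          (X ^ k * ((n - k).factorial : ℝ) * Real.Gamma ((k : ℝ) + 1 - ζ) *
            ((k.factorial : ℝ)) ^ 2) :=
  caputo_deriv_shiftedLegendre_general X n ζ hζ x hx
end

section
/- Let X > 0 and let m, n ∈ ℕ. Then ∫_0^X P̂_n(x) P̂_m(x) dx = 0 if n ≠ m, and ∫_0^X P̂_n(x)² dx = X/(2n+1); i.e., the shifted Legendre polynomials are mutually orthogonal in L²([0, X]). -/
/-!
Writing `P̂_n(x) = Σ_j c_{n,j} (x/X)^j`, the moment `∫₀ˣ P̂_n(x) (x/X)^k dx` equals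
`X · Σ_j c_{n,j} / (k + j + 1)`. The coefficients `c_{n,j}` are exactly the partial-fraction
coefficients of `t(t-1)⋯(t-n+1) / ((t+1)(t+2)⋯(t+n+1))` (Lagrange interpolation of the falling
factorial at the nodes `-1, …, -(n+1)`), so the moment is `X · k(k-1)⋯(k-n+1) / ((k+1)⋯(k+n+1))`.
It vanishes for `k < n`, which gives orthogonality, and for `k = n` it is `X · n!² / (2n+1)!`;
multiplied by the leading coefficient `(2n)! / n!²` this gives the norm `X / (2n+1)`.
-/

open Finset
open scoped Nat

namespace Lagrange

variable {F ι : Type*} [Field F] [DecidableEq ι] {s : Finset ι} {v : ι → F}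

theorem eval_eq_eval_nodal_mul_sum {f : Polynomial F} (hvs : Set.InjOn v s)
    (hf : f.degree < #s) {x : F} (hx : ∀ i ∈ s, x ≠ v i) :
    f.eval x = (nodal s v).eval x * ∑ i ∈ s, nodalWeight s v i * (x - v i)⁻¹ * f.eval (v i) := by
  conv_lhs => rw [eq_interpolate hvs hf]
  exact eval_interpolate_not_at_node _ hx

end Lagrange

section Factorial

variable {R : Type*} [CommRing R]

theorem factorial_mul_prod_range_add_one (a b : ℕ) :
    (a ! : R) * ∏ i ∈ range b, ((a : R) + i + 1) = (a + b)! := by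
  rw [← Nat.factorial_mul_ascFactorial, Nat.ascFactorial_eq_prod_range]
  push_cast
  simp only [add_right_comm]

theorem prod_erase_range_sub (n : ℕ) {j : ℕ} (hj : j ≤ n) :
    ∏ i ∈ (range (n + 1)).erase j, ((i : R) - j) = (-1) ^ j * j ! * (n - j)! := by
  have hsplit : (range (n + 1)).erase j = range j ∪ Ico (j + 1) (n + 1) := by
    ext i; simp only [mem_erase, mem_range, mem_union, mem_Ico]; omega
  have hbelow : ∏ i ∈ range j, ((i : R) - j) = (-1) ^ j * j ! := by
    rw [prod_congr rfl fun (i : ℕ) _ => show (i : R) - j = -1 * (j - i) by ring, prod_mul_distrib,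
      prod_const, card_range, ← descPochhammer_eval_eq_prod_range,
      descPochhammer_eval_eq_descFactorial, Nat.descFactorial_self]
  have habove : ∏ i ∈ Ico (j + 1) (n + 1), ((i : R) - j) = (n - j)! := by
    rw [prod_Ico_eq_prod_range, show n + 1 - (j + 1) = n - j by omega, ← Nat.zero_add (n - j),
      ← factorial_mul_prod_range_add_one]
    simp only [Nat.factorial_zero, Nat.cast_one, one_mul, Nat.cast_zero, zero_add]
    exact prod_congr rfl fun i _ => by push_cast; ring
  rw [hsplit, prod_union (disjoint_left.mpr fun i hi hi' => by
    simp only [mem_range, mem_Ico] at hi hi'; omega), hbelow, habove]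

theorem factorial_mul_eval_descPochhammer_neg_add_one (n j : ℕ) :
    (j ! : R) * (descPochhammer R n).eval (-((j : R) + 1)) = (-1) ^ n * (j + n)! := by
  rw [descPochhammer_eval_eq_prod_range, ← factorial_mul_prod_range_add_one,
    prod_congr rfl fun (i : ℕ) _ => show -((j : R) + 1) - i = -1 * (j + i + 1) by ring,
    prod_mul_distrib, prod_const, card_range]
  ring

end Factorial

noncomputable def shiftedLegendreCoeff (n j : ℕ) : ℝ :=
  (-1 : ℝ) ^ (n + j) * (n + j)! / ((n - j)! * (j ! : ℝ) ^ 2)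

theorem nodalWeight_mul_eval_descPochhammer {n j : ℕ} (hj : j ≤ n) :
    Lagrange.nodalWeight (range (n + 1)) (fun i : ℕ => -((i : ℝ) + 1)) j *
      (descPochhammer ℝ n).eval (-((j : ℝ) + 1)) = shiftedLegendreCoeff n j := by
  have hweight : Lagrange.nodalWeight (range (n + 1)) (fun i : ℕ => -((i : ℝ) + 1)) j =
      ((-1 : ℝ) ^ j * j ! * (n - j)!)⁻¹ := by
    rw [Lagrange.nodalWeight, prod_inv_distrib, ← prod_erase_range_sub n hj]
    exact congrArg _ (prod_congr rfl fun i _ => by ring)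
  have heval : (descPochhammer ℝ n).eval (-((j : ℝ) + 1)) = (-1) ^ n * (j + n)! / j ! := by
    rw [eq_div_iff (by positivity), mul_comm]
    exact factorial_mul_eval_descPochhammer_neg_add_one n j
  rw [hweight, heval, shiftedLegendreCoeff, add_comm j n]
  field_simp
  rw [pow_add, mul_left_comm, ← mul_pow, neg_one_mul, neg_neg, one_pow, mul_one]

theorem sum_shiftedLegendreCoeff_div (n : ℕ) {t : ℝ} (ht : ∀ j ∈ range (n + 1), t + j + 1 ≠ 0) :
    ∑ j ∈ range (n + 1), shiftedLegendreCoeff n j / (t + j + 1) =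
      (descPochhammer ℝ n).eval t / ∏ j ∈ range (n + 1), (t + j + 1) := by
  have hnode : ∀ j : ℕ, t - -((j : ℝ) + 1) = t + j + 1 := fun j => by ring
  have hinj : Set.InjOn (fun i : ℕ => -((i : ℝ) + 1)) (range (n + 1)) :=
    fun a _ b _ h => by simpa using h
  have hdeg : (descPochhammer ℝ n).degree < #(range (n + 1)) :=
    Polynomial.degree_le_natDegree.trans_lt (by
      rw [descPochhammer_natDegree, card_range]; exact_mod_cast n.lt_succ_self)
  rw [Lagrange.eval_eq_eval_nodal_mul_sum hinj hdeg
      (fun j hj h => ht j hj (by rw [← hnode, h, sub_self])), Lagrange.eval_nodal]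
  simp only [hnode]
  rw [mul_div_cancel_left₀ _ (prod_ne_zero_iff.mpr ht)]
  refine sum_congr rfl fun j hj => ?_
  rw [← nodalWeight_mul_eval_descPochhammer (Nat.lt_succ_iff.mp (mem_range.mp hj))]
  ring

theorem shiftedLegendre_eq_sum (X : ℝ) (n : ℕ) (x : ℝ) :
    shiftedLegendre X n x = ∑ j ∈ range (n + 1), shiftedLegendreCoeff n j * (x / X) ^ j := by
  unfold shiftedLegendre shiftedLegendreCoeff
  refine sum_congr rfl fun j _ => ?_
  rw [div_pow]
  ring

theorem continuous_shiftedLegendre (X : ℝ) (n : ℕ) : Continuous (shiftedLegendre X n) := by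
  unfold shiftedLegendre
  fun_prop

theorem integral_div_pow (X : ℝ) (k : ℕ) : ∫ x in (0 : ℝ)..X, (x / X) ^ k = X / (k + 1) := by
  simp_rw [div_pow]
  rw [intervalIntegral.integral_div, integral_pow]
  rcases eq_or_ne X 0 with rfl | hX
  · simp
  · field_simp
    ring

theorem integral_shiftedLegendre_mul_div_pow (X : ℝ) (n k : ℕ) :
    ∫ x in (0 : ℝ)..X, shiftedLegendre X n x * (x / X) ^ k =
      X * ∑ j ∈ range (n + 1), shiftedLegendreCoeff n j / (k + j + 1) := by
  simp_rw [shiftedLegendre_eq_sum, sum_mul, mul_assoc, ← pow_add]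
  rw [intervalIntegral.integral_finsetSum fun j _ =>
    (by fun_prop : Continuous _).intervalIntegrable _ _, mul_sum]
  refine sum_congr rfl fun j _ => ?_
  rw [intervalIntegral.integral_const_mul, integral_div_pow]
  push_cast
  ring

theorem integral_shiftedLegendre_mul_div_pow_of_lt (X : ℝ) {n k : ℕ} (hk : k < n) :
    ∫ x in (0 : ℝ)..X, shiftedLegendre X n x * (x / X) ^ k = 0 := by
  rw [integral_shiftedLegendre_mul_div_pow, sum_shiftedLegendreCoeff_div n fun j _ => by positivity,
    descPochhammer_eval_coe_nat_of_lt hk, zero_div, mul_zero]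

theorem shiftedLegendreCoeff_self_mul_integral (X : ℝ) (n : ℕ) :
    shiftedLegendreCoeff n n * ∫ x in (0 : ℝ)..X, shiftedLegendre X n x * (x / X) ^ n =
      X / (2 * n + 1) := by
  have hprod : ∏ j ∈ range (n + 1), ((n : ℝ) + j + 1) = (n + n + 1)! / n ! := by
    rw [eq_div_iff (by positivity), mul_comm, factorial_mul_prod_range_add_one, add_assoc]
  rw [integral_shiftedLegendre_mul_div_pow, sum_shiftedLegendreCoeff_div n fun j _ => by positivity,
    descPochhammer_eval_eq_descFactorial, Nat.descFactorial_self, hprod, shiftedLegendreCoeff,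
    Even.neg_one_pow ⟨n, rfl⟩, Nat.sub_self, Nat.factorial_succ]
  push_cast
  field_simp
  ring

theorem integral_shiftedLegendre_mul (X : ℝ) (n m : ℕ) :
    ∫ x in (0 : ℝ)..X, shiftedLegendre X n x * shiftedLegendre X m x =
      ∑ k ∈ range (m + 1),
        shiftedLegendreCoeff m k * ∫ x in (0 : ℝ)..X, shiftedLegendre X n x * (x / X) ^ k := by
  simp_rw [shiftedLegendre_eq_sum X m, mul_sum, mul_left_comm (shiftedLegendre X n _)]
  rw [intervalIntegral.integral_finsetSum fun k _ =>
    (by have := continuous_shiftedLegendre X n; fun_prop : Continuous _).intervalIntegrable _ _]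
  simp_rw [intervalIntegral.integral_const_mul]

theorem integral_shiftedLegendre_mul_eq_zero_of_lt (X : ℝ) {m n : ℕ} (h : m < n) :
    ∫ x in (0 : ℝ)..X, shiftedLegendre X n x * shiftedLegendre X m x = 0 := by
  rw [integral_shiftedLegendre_mul]
  exact sum_eq_zero fun k hk => by
    rw [integral_shiftedLegendre_mul_div_pow_of_lt X (by grind), mul_zero]

theorem integral_shiftedLegendre_sq (X : ℝ) (n : ℕ) :
    ∫ x in (0 : ℝ)..X, shiftedLegendre X n x ^ 2 = X / (2 * n + 1) := by
  simp_rw [sq]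
  rw [integral_shiftedLegendre_mul, sum_range_succ, shiftedLegendreCoeff_self_mul_integral,
    sum_eq_zero fun k hk => by
      rw [integral_shiftedLegendre_mul_div_pow_of_lt X (mem_range.mp hk), mul_zero], zero_add]

theorem shiftedLegendre_orthogonality_general (X : ℝ) (m n : ℕ) :
    (n ≠ m → ∫ x in (0:ℝ)..X, shiftedLegendre X n x * shiftedLegendre X m x = 0) ∧
    ∫ x in (0:ℝ)..X, (shiftedLegendre X n x) ^ 2 = X / (2 * (n : ℝ) + 1) := by
  refine ⟨fun hnm => ?_, integral_shiftedLegendre_sq X n⟩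
  rcases hnm.lt_or_gt with h | h
  · simp_rw [mul_comm (shiftedLegendre X n _)]
    exact integral_shiftedLegendre_mul_eq_zero_of_lt X h
  · exact integral_shiftedLegendre_mul_eq_zero_of_lt X h

/-- **Orthogonality of the shifted Legendre polynomials on `[0, X]`.**
`∫₀ˣ P̂_n P̂_m = 0` for `n ≠ m`, and `∫₀ˣ P̂_n² = X/(2n+1)`. -/
theorem shiftedLegendre_orthogonality (X : ℝ) (hX : 0 < X) (m n : ℕ) :
    (n ≠ m → ∫ x in (0:ℝ)..X, shiftedLegendre X n x * shiftedLegendre X m x = 0) ∧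
    ∫ x in (0:ℝ)..X, (shiftedLegendre X n x) ^ 2 = X / (2 * (n : ℝ) + 1) :=
  shiftedLegendre_orthogonality_general X m n
end
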